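/- arXiv:2307.13823 — 2 statements merged into one kernel-verified Lean document; each statement's English description precedes it below -/
import Mathlib

section
/- For any alphabet Σ and any three nonempty strings x, y, z over Σ all of the same length n, the f̄-distance satisfies the triangle inequality: f̄(x,z) ≤ f̄(x,y) + f̄(y,z). -/
/-- A match between two strings `a` and `b`: a finite set of pairs of (0-based) indices,
strictly increasing in both coordinates simultaneously, matching equal symbols. -/
def IsMatch {α : Type*} (a b : List α) (M : Finset (ℕ × ℕ)) : Prop :=
  (∀ p ∈ M, p.1 < a.length ∧ p.2 < b.length ∧ a[p.1]? = b[p.2]?) ∧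
  (∀ p ∈ M, ∀ q ∈ M, (p.1 < q.1 ↔ p.2 < q.2))

/-- The maximal cardinality of a match between `a` and `b`. -/
noncomputable def maxMatch {α : Type*} (a b : List α) : ℕ :=
  sSup {r : ℕ | ∃ M : Finset (ℕ × ℕ), IsMatch a b M ∧ M.card = r}

/-- The `f̄` distance between two strings:
`f̄(a,b) = 1 - 2 · max{|M| : M a match between a and b} / (|a| + |b|)`. -/
noncomputable def fbar {α : Type*} (a b : List α) : ℝ :=
  1 - 2 * (maxMatch a b : ℝ) / ((a.length : ℝ) + (b.length : ℝ))

lemma IsMatch.eq_iff {α : Type*} {a b : List α} {M : Finset (ℕ × ℕ)}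
    (h : IsMatch a b M) {p q : ℕ × ℕ} (hp : p ∈ M) (hq : q ∈ M) :
    p.1 = q.1 ↔ p.2 = q.2 := by
  have h1 := h.2 p hp q hq
  have h2 := h.2 q hq p hp
  omega

lemma IsMatch.fst_injOn {α : Type*} {a b : List α} {M : Finset (ℕ × ℕ)}
    (h : IsMatch a b M) : Set.InjOn Prod.fst (M : Set (ℕ × ℕ)) := by
  intro p hp q hq hpq
  exact Prod.ext hpq ((h.eq_iff hp hq).1 hpq)

lemma IsMatch.snd_injOn {α : Type*} {a b : List α} {M : Finset (ℕ × ℕ)}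
    (h : IsMatch a b M) : Set.InjOn Prod.snd (M : Set (ℕ × ℕ)) := by
  intro p hp q hq hpq
  exact Prod.ext ((h.eq_iff hp hq).2 hpq) hpq

lemma matchSet_nonempty {α : Type*} (a b : List α) :
    {r : ℕ | ∃ M : Finset (ℕ × ℕ), IsMatch a b M ∧ M.card = r}.Nonempty :=
  ⟨0, ∅, ⟨by simp, by simp⟩, by simp⟩

lemma matchSet_bddAbove {α : Type*} (a b : List α) :
    BddAbove {r : ℕ | ∃ M : Finset (ℕ × ℕ), IsMatch a b M ∧ M.card = r} := by
  refine ⟨a.length, ?_⟩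
  rintro r ⟨M, hM, rfl⟩
  have hsub : M.image Prod.fst ⊆ Finset.range a.length := by
    intro i hi
    simp only [Finset.mem_image] at hi
    obtain ⟨p, hp, rfl⟩ := hi
    exact Finset.mem_range.2 (hM.1 p hp).1
  calc M.card = (M.image Prod.fst).card :=
        (Finset.card_image_of_injOn hM.fst_injOn).symm
    _ ≤ (Finset.range a.length).card := Finset.card_le_card hsub
    _ = a.length := Finset.card_range _

lemma exists_maxMatch {α : Type*} (a b : List α) :
    ∃ M : Finset (ℕ × ℕ), IsMatch a b M ∧ M.card = maxMatch a b :=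
  Nat.sSup_mem (matchSet_nonempty a b) (matchSet_bddAbove a b)

lemma card_le_maxMatch {α : Type*} {a b : List α} {M : Finset (ℕ × ℕ)}
    (h : IsMatch a b M) : M.card ≤ maxMatch a b :=
  le_csSup (matchSet_bddAbove a b) ⟨M, h, rfl⟩

/-- Key combinatorial lemma: composing matches through `y`. -/
lemma maxMatch_triangle {α : Type*} (x y z : List α) :
    maxMatch x y + maxMatch y z ≤ y.length + maxMatch x z := by
  obtain ⟨M1, hM1, hc1⟩ := exists_maxMatch x y
  obtain ⟨M2, hM2, hc2⟩ := exists_maxMatch y z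
  set S : Finset ((ℕ × ℕ) × (ℕ × ℕ)) :=
    (M1 ×ˢ M2).filter (fun pq => pq.1.2 = pq.2.1) with hS
  have hmemS : ∀ pq : (ℕ × ℕ) × (ℕ × ℕ),
      pq ∈ S ↔ pq.1 ∈ M1 ∧ pq.2 ∈ M2 ∧ pq.1.2 = pq.2.1 := by
    intro pq
    simp [hS, Finset.mem_filter, Finset.mem_product, and_assoc]
  set M : Finset (ℕ × ℕ) := S.image (fun pq => (pq.1.1, pq.2.2)) with hMdef
  -- M is a match between x and z
  have hM : IsMatch x z M := by
    constructor
    · intro p hp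
      simp only [hMdef, Finset.mem_image] at hp
      obtain ⟨pq, hpq, rfl⟩ := hp
      obtain ⟨h1, h2, he⟩ := (hmemS pq).1 hpq
      obtain ⟨hx1, hy1, hval1⟩ := hM1.1 pq.1 h1
      obtain ⟨hy2, hz2, hval2⟩ := hM2.1 pq.2 h2
      exact ⟨hx1, hz2, by rw [hval1, he, hval2]⟩
    · intro p hp q hq
      simp only [hMdef, Finset.mem_image] at hp hq
      obtain ⟨pq, hpq, rfl⟩ := hp
      obtain ⟨pq', hpq', rfl⟩ := hq
      obtain ⟨h1, h2, he⟩ := (hmemS pq).1 hpq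
      obtain ⟨h1', h2', he'⟩ := (hmemS pq').1 hpq'
      have e1 := hM1.2 pq.1 h1 pq'.1 h1'
      have e2 := hM2.2 pq.2 h2 pq'.2 h2'
      simp only
      omega
  -- injectivity of the projections on S
  have hSinj : Set.InjOn (fun pq : (ℕ × ℕ) × (ℕ × ℕ) => (pq.1.1, pq.2.2)) S := by
    intro pq hpq pq' hpq' heq
    obtain ⟨h1, h2, he⟩ := (hmemS pq).1 hpq
    obtain ⟨h1', h2', he'⟩ := (hmemS pq').1 hpq'
    simp only [Prod.mk.injEq] at heq
    have e1 : pq.1 = pq'.1 := hM1.fst_injOn h1 h1' heq.1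
    have e2 : pq.2 = pq'.2 := hM2.fst_injOn h2 h2' (by rw [← he, ← he', e1])
    exact Prod.ext e1 e2
  have hcardM : M.card = S.card := Finset.card_image_of_injOn hSinj
  -- S is in bijection with J := (M1.image snd) ∩ (M2.image fst)
  set J : Finset ℕ := (M1.image Prod.snd) ∩ (M2.image Prod.fst) with hJ
  have hcardS : S.card = J.card := by
    apply Finset.card_bij (fun pq _ => pq.1.2)
    · intro pq hpq
      obtain ⟨h1, h2, he⟩ := (hmemS pq).1 hpq
      simp only [hJ, Finset.mem_inter, Finset.mem_image]
      exact ⟨⟨pq.1, h1, rfl⟩, ⟨pq.2, h2, he.symm⟩⟩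
    · intro pq hpq pq' hpq' heq
      obtain ⟨h1, h2, he⟩ := (hmemS pq).1 hpq
      obtain ⟨h1', h2', he'⟩ := (hmemS pq').1 hpq'
      have e1 : pq.1 = pq'.1 := hM1.snd_injOn h1 h1' heq
      have e2 : pq.2 = pq'.2 := hM2.fst_injOn h2 h2' (by rw [← he, ← he', e1])
      exact Prod.ext e1 e2
    · intro j hj
      simp only [hJ, Finset.mem_inter, Finset.mem_image] at hj
      obtain ⟨⟨p, hp, hpj⟩, ⟨q, hq, hqj⟩⟩ := hj
      exact ⟨(p, q), (hmemS (p, q)).2 ⟨hp, hq, by simp [hpj, hqj]⟩, hpj⟩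
  -- counting
  have hc1' : (M1.image Prod.snd).card = M1.card :=
    Finset.card_image_of_injOn hM1.snd_injOn
  have hc2' : (M2.image Prod.fst).card = M2.card :=
    Finset.card_image_of_injOn hM2.fst_injOn
  have hunion : (M1.image Prod.snd) ∪ (M2.image Prod.fst) ⊆ Finset.range y.length := by
    intro j hj
    simp only [Finset.mem_union, Finset.mem_image] at hj
    rcases hj with ⟨p, hp, rfl⟩ | ⟨p, hp, rfl⟩
    · exact Finset.mem_range.2 (hM1.1 p hp).2.1
    · exact Finset.mem_range.2 (hM2.1 p hp).1
  have hub : ((M1.image Prod.snd) ∪ (M2.image Prod.fst)).card ≤ y.length := by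
    simpa using Finset.card_le_card hunion
  have hIE := Finset.card_union_add_card_inter (M1.image Prod.snd) (M2.image Prod.fst)
  have hfin : M.card ≤ maxMatch x z := card_le_maxMatch hM
  rw [hJ] at hcardS
  rw [← hc1, ← hc2, ← hc1', ← hc2']
  omega

/-- The `f̄`-distance satisfies the triangle inequality on nonempty strings
of the same length `n`. -/
theorem fbar_triangle_same_length {α : Type*} (n : ℕ) (hn : 0 < n)
    (x y z : List α) (hx : x.length = n) (hy : y.length = n) (hz : z.length = n) :
    fbar x z ≤ fbar x y + fbar y z := by
  have key := maxMatch_triangle x y z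
  rw [hy] at key
  have hn' : (0 : ℝ) < n := by exact_mod_cast hn
  have hkey : (maxMatch x y : ℝ) + (maxMatch y z : ℝ) ≤ n + maxMatch x z := by
    exact_mod_cast key
  simp only [fbar, hx, hy, hz]
  have h2 : (0 : ℝ) < (n : ℝ) + (n : ℝ) := by positivity
  have h := (div_le_div_iff_of_pos_right h2).2
    (show 2 * (maxMatch x y : ℝ) + 2 * (maxMatch y z : ℝ) ≤
      ((n : ℝ) + (n : ℝ)) + 2 * (maxMatch x z : ℝ) by linarith)
  rw [add_div, add_div, div_self (ne_of_gt h2)] at h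
  linarith
end

section
/- Let X be a Polish space equipped with its Borel σ-algebra, and let E ⊆ X × X be an equivalence relation on X (viewed as a set of ordered pairs) that is an analytic subset of X × X and has only countably many equivalence classes. Then E is a Borel subset of X × X, and each equivalence class of E is a Borel subset of X. -/
/-- An analytic equivalence relation on a Polish space with only countably many equivalence
classes is Borel, and each of its equivalence classes is Borel. -/
theorem analytic_equivalence_countable_classes_borel
    {X : Type*} [TopologicalSpace X] [PolishSpace X] [MeasurableSpace X] [BorelSpace X]
    (E : X → X → Prop) (hE : Equivalence E)
    (hAn : MeasureTheory.AnalyticSet {p : X × X | E p.1 p.2})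
    (hcnt : Set.Countable {s : Set X | ∃ x : X, s = {y : X | E x y}}) :
    MeasurableSet {p : X × X | E p.1 p.2} ∧ ∀ x : X, MeasurableSet {y : X | E x y} := by
  set S : Set (Set X) := {s : Set X | ∃ x : X, s = {y : X | E x y}} with hS
  -- each class is analytic, as a slice of an analytic set
  have hclass : ∀ x : X, MeasureTheory.AnalyticSet {y : X | E x y} := by
    intro x
    have h := hAn.preimage (f := fun y : X => (x, y)) (Continuous.prodMk_right x)
    exact h
  -- each class is Borel: its complement is a countable union of other classes
  have hmcl : ∀ x : X, MeasurableSet {y : X | E x y} := by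
    intro x
    apply MeasureTheory.AnalyticSet.measurableSet_of_compl (hclass x)
    have hcompl : {y : X | E x y}ᶜ = ⋃₀ {s ∈ S | s ≠ {y : X | E x y}} := by
      ext y
      simp only [Set.mem_compl_iff, Set.mem_setOf_eq, Set.mem_sUnion, Set.mem_sep_iff]
      constructor
      · intro h
        refine ⟨{z : X | E y z}, ⟨⟨y, rfl⟩, ?_⟩, hE.refl y⟩
        intro heq
        have : y ∈ {z : X | E x z} := heq ▸ (hE.refl y)
        exact h this
      · rintro ⟨s, ⟨⟨w, rfl⟩, hne⟩, hy⟩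
        intro hxy
        apply hne
        have hxw : E x w := hE.trans hxy (hE.symm hy)
        ext z
        exact ⟨fun hz => hE.trans hxw hz, fun hz => hE.trans (hE.symm hxw) hz⟩
    rw [hcompl]
    have hTc : Set.Countable {s ∈ S | s ≠ {y : X | E x y}} := hcnt.mono (Set.sep_subset _ _)
    have := hTc.to_subtype
    rw [Set.sUnion_eq_iUnion]
    apply MeasureTheory.AnalyticSet.iUnion
    rintro ⟨s, ⟨x', rfl⟩, -⟩
    exact hclass x'
  refine ⟨?_, hmcl⟩
  -- E is the countable union of the Borel squares C × C over classes C
  have hEeq : {p : X × X | E p.1 p.2} = ⋃₀ {t : Set (X × X) | ∃ s ∈ S, t = s ×ˢ s} := by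
    ext ⟨x, y⟩
    simp only [Set.mem_setOf_eq, Set.mem_sUnion]
    constructor
    · intro h
      exact ⟨{z : X | E x z} ×ˢ {z : X | E x z}, ⟨_, ⟨x, rfl⟩, rfl⟩,
        ⟨hE.refl x, h⟩⟩
    · rintro ⟨t, ⟨s, ⟨w, rfl⟩, rfl⟩, hx, hy⟩
      exact hE.trans (hE.symm hx) hy
  rw [hEeq]
  have hTc : Set.Countable {t : Set (X × X) | ∃ s ∈ S, t = s ×ˢ s} := by
    have : {t : Set (X × X) | ∃ s ∈ S, t = s ×ˢ s} = (fun s : Set X => s ×ˢ s) '' S := by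
      ext t; simp [eq_comm]
    rw [this]
    exact hcnt.image _
  apply MeasurableSet.sUnion hTc
  rintro t ⟨s, ⟨w, rfl⟩, rfl⟩
  exact (hmcl w).prod (hmcl w)
end
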